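/- arXiv:2503.20593 — 4 statements merged into one kernel-verified Lean document; each statement's English description precedes it below -/
import Mathlib

section
/- In the two-relation database setting, the relation ≡ₛ of being artificially unique duplicates in s with respect to the database {r, s} is an equivalence relation on the tuples of s: it is reflexive, symmetric, and transitive. -/
/-- Artificially unique duplicates in `r`: `t₁ ≡ᵣ t₂` iff `sim (t₁ A) (t₂ A)` for every
`A ∈ Y`. -/
def AUD {R D : Type*} (sim : D → D → Prop) (Y : Set R) (t₁ t₂ : R → D) : Prop :=
  ∀ A ∈ Y, sim (t₁ A) (t₂ A)

/-- Artificially unique duplicates in `s` with respect to the database `{r, s}`: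
`u₁ ≡ₛ u₂` iff `sim (u₁ A) (u₂ A)` for every `A ∈ Xs \ {F}`, and either `u₁ F = u₂ F`
or the (unique) tuples `t₁, t₂ ∈ r` with `tᵢ K = uᵢ F` satisfy `t₁ ≡ᵣ t₂`. -/
def AUDs {R S D : Type*} (sim : D → D → Prop) (r : Set (R → D)) (K : R) (Y : Set R)
    (Xs : Set S) (F : S) (u₁ u₂ : S → D) : Prop :=
  (∀ A ∈ Xs \ {F}, sim (u₁ A) (u₂ A)) ∧
  (u₁ F = u₂ F ∨ ∃ t₁ ∈ r, ∃ t₂ ∈ r, t₁ K = u₁ F ∧ t₂ K = u₂ F ∧ AUD sim Y t₁ t₂)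

/-- in the two-relation database setting, `≡ₛ` is an equivalence relation
on the tuples of `s`: reflexive, symmetric and transitive. -/
theorem AUDs_equivalence_on_s {R S D : Type*} [LinearOrder D]
    (sim : D → D → Prop) (hsim : Equivalence sim)
    (r : Set (R → D)) (hrfin : r.Finite)
    (K : R) (hK : Set.InjOn (fun t => t K) r)
    (Y : Set R) (hY : K ∉ Y)
    (s : Set (S → D)) (hsfin : s.Finite)
    (SKs : S) (hSKs : Set.InjOn (fun u => u SKs) s)
    (F : S) (hFK : ∀ u ∈ s, ∃ t ∈ r, t K = u F)
    (Xs : Set S) (hXs : SKs ∉ Xs) (hF : F ∈ Xs) :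
    (∀ u ∈ s, AUDs sim r K Y Xs F u u) ∧
    (∀ u₁ ∈ s, ∀ u₂ ∈ s, AUDs sim r K Y Xs F u₁ u₂ → AUDs sim r K Y Xs F u₂ u₁) ∧
    (∀ u₁ ∈ s, ∀ u₂ ∈ s, ∀ u₃ ∈ s,
      AUDs sim r K Y Xs F u₁ u₂ → AUDs sim r K Y Xs F u₂ u₃ →
        AUDs sim r K Y Xs F u₁ u₃) := by
  refine ⟨?_, ?_, ?_⟩
  · intro u hu
    exact ⟨fun A _ => hsim.refl _, Or.inl rfl⟩
  · rintro u₁ h₁ u₂ h₂ ⟨ha, hb⟩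
    refine ⟨fun A hA => hsim.symm (ha A hA), ?_⟩
    rcases hb with h | ⟨t₁, ht₁, t₂, ht₂, hk₁, hk₂, haud⟩
    · exact Or.inl h.symm
    · exact Or.inr ⟨t₂, ht₂, t₁, ht₁, hk₂, hk₁, fun A hA => hsim.symm (haud A hA)⟩
  · rintro u₁ h₁ u₂ h₂ u₃ h₃ ⟨ha, hb⟩ ⟨ha', hb'⟩
    refine ⟨fun A hA => hsim.trans (ha A hA) (ha' A hA), ?_⟩
    rcases hb with h | ⟨t₁, ht₁, t₂, ht₂, hk₁, hk₂, haud⟩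
    · rcases hb' with h' | ⟨t₂, ht₂, t₃, ht₃, hk₂, hk₃, haud'⟩
      · exact Or.inl (h.trans h')
      · exact Or.inr ⟨t₂, ht₂, t₃, ht₃, by rw [hk₂, ← h], hk₃, haud'⟩
    · rcases hb' with h' | ⟨t₂', ht₂', t₃, ht₃, hk₂', hk₃, haud'⟩
      · exact Or.inr ⟨t₁, ht₁, t₂, ht₂, hk₁, by rw [hk₂, h'], haud⟩
      · have : t₂ = t₂' := hK ht₂ ht₂' (by simp [hk₂, hk₂'])
        subst this
        exact Or.inr ⟨t₁, ht₁, t₃, ht₃, hk₁, hk₃,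
          fun A hA => hsim.trans (haud A hA) (haud' A hA)⟩
end

section
/- In the two-relation database setting, let u₁, u₂ ∈ s be such that either u₁(F) = u₂(F) or the unique tuples t₁, t₂ ∈ r with tᵢ(K) = uᵢ(F) satisfy t₁ ≡ᵣ t₂. Then min [u₁(F)]ᵣ = min [u₂(F)]ᵣ; consequently the tuples of clean_FK(s, F, r, K) obtained from u₁ and u₂ (agreeing with them on S \ {F}) carry equal F-values. -/
/-- For a value `v ∈ π_K(r)`, the equivalence class
`[v]ᵣ = { t'(K) : t' ∈ r, t ≡ᵣ t' }` of the (unique) tuple `t ∈ r` with `t K = v`. -/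
def classVal {R D : Type*} (r : Set (R → D)) (sim : D → D → Prop) (Y : Set R) (K : R)
    (v : D) : Set D :=
  { w | ∃ t ∈ r, t K = v ∧ ∃ t' ∈ r, AUD sim Y t t' ∧ w = t' K }

/-- in the two-relation database setting, if `u₁, u₂ ∈ s` are such that
either `u₁ F = u₂ F` or the unique tuples `t₁, t₂ ∈ r` with `tᵢ K = uᵢ F` satisfy
`t₁ ≡ᵣ t₂`, then `min [u₁ F]ᵣ = min [u₂ F]ᵣ`; consequently the tuples of
`clean_FK(s, F, r, K)` obtained from `u₁` and `u₂` (agreeing with them on `S \ {F}` and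
carrying those minima as `F`-values) carry equal `F`-values. -/
theorem cleanFK_min_eq_of_equiv {R S D : Type*} [LinearOrder D]
    (sim : D → D → Prop) (hsim : Equivalence sim)
    (r : Set (R → D)) (hrfin : r.Finite)
    (K : R) (hK : Set.InjOn (fun t => t K) r)
    (Y : Set R) (hY : K ∉ Y)
    (s : Set (S → D)) (hsfin : s.Finite)
    (SKs : S) (hSKs : Set.InjOn (fun u => u SKs) s)
    (F : S) (hFK : ∀ u ∈ s, ∃ t ∈ r, t K = u F)
    (Xs : Set S) (hXs : SKs ∉ Xs) (hF : F ∈ Xs)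
    (u₁ : S → D) (hu₁ : u₁ ∈ s) (u₂ : S → D) (hu₂ : u₂ ∈ s)
    (h : u₁ F = u₂ F ∨
      ∃ t₁ ∈ r, ∃ t₂ ∈ r, t₁ K = u₁ F ∧ t₂ K = u₂ F ∧ AUD sim Y t₁ t₂) :
    (∀ m₁ m₂, IsLeast (classVal r sim Y K (u₁ F)) m₁ →
      IsLeast (classVal r sim Y K (u₂ F)) m₂ → m₁ = m₂) ∧
    (∀ w₁ w₂ : S → D,
      ((∀ A, A ≠ F → w₁ A = u₁ A) ∧ IsLeast (classVal r sim Y K (u₁ F)) (w₁ F)) →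
      ((∀ A, A ≠ F → w₂ A = u₂ A) ∧ IsLeast (classVal r sim Y K (u₂ F)) (w₂ F)) →
        w₁ F = w₂ F) := by
  have hset : classVal r sim Y K (u₁ F) = classVal r sim Y K (u₂ F) := by
    rcases h with h | ⟨t₁, ht₁, t₂, ht₂, hk₁, hk₂, haud⟩
    · rw [h]
    · ext w
      constructor
      · rintro ⟨t, ht, htk, t', ht', haud', rfl⟩
        have : t = t₁ := hK ht ht₁ (by simp [htk, hk₁])
        subst this
        exact ⟨t₂, ht₂, hk₂, t', ht', fun A hA =>
          hsim.trans (hsim.symm (haud A hA)) (haud' A hA), rfl⟩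
      · rintro ⟨t, ht, htk, t', ht', haud', rfl⟩
        have : t = t₂ := hK ht ht₂ (by simp [htk, hk₂])
        subst this
        exact ⟨t₁, ht₁, hk₁, t', ht', fun A hA =>
          hsim.trans (haud A hA) (haud' A hA), rfl⟩
  have hmin : ∀ m₁ m₂, IsLeast (classVal r sim Y K (u₁ F)) m₁ →
      IsLeast (classVal r sim Y K (u₂ F)) m₂ → m₁ = m₂ := by
    intro m₁ m₂ h₁ h₂
    rw [hset] at h₁
    exact le_antisymm (h₁.2 h₂.1) (h₂.2 h₁.1)
  exact ⟨hmin, fun w₁ w₂ hw₁ hw₂ => hmin _ _ hw₁.2 hw₂.2⟩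
end

section
/- In the two-relation database setting, cleaning preserves referential integrity: if π_F(s) ⊆ π_K(r), then π_F(clean_FK(s, F, r, K)) ⊆ π_K(clean_SK(r, K, Y)). -/
/-- `clean_SK(r, K, Y)`: tuples agreeing with some `t' ∈ r` on `R \ {K}` and whose
`K`-value is the minimum (the least element) of `[t'(K)]ᵣ`. -/
def cleanSK {R D : Type*} [LinearOrder D] (r : Set (R → D)) (sim : D → D → Prop)
    (Y : Set R) (K : R) : Set (R → D) :=
  { t | ∃ t' ∈ r, (∀ A, A ≠ K → t A = t' A) ∧ IsLeast (classVal r sim Y K (t' K)) (t K) }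

/-- `clean_FK(s, F, r, K)`: tuples agreeing with some `u' ∈ s` on `S \ {F}` and whose
`F`-value is the minimum (the least element) of `[u'(F)]ᵣ`. -/
def cleanFK {R S D : Type*} [LinearOrder D] (s : Set (S → D)) (F : S)
    (r : Set (R → D)) (K : R) (sim : D → D → Prop) (Y : Set R) : Set (S → D) :=
  { u | ∃ u' ∈ s, (∀ A, A ≠ F → u A = u' A) ∧ IsLeast (classVal r sim Y K (u' F)) (u F) }

/-- cleaning preserves referential integrity: if `π_F(s) ⊆ π_K(r)` then
`π_F(clean_FK(s, F, r, K)) ⊆ π_K(clean_SK(r, K, Y))`. -/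
theorem clean_preserves_referential_integrity {R S D : Type*} [LinearOrder D]
    (sim : D → D → Prop) (hsim : Equivalence sim)
    (r : Set (R → D)) (hrfin : r.Finite)
    (K : R) (hK : Set.InjOn (fun t => t K) r)
    (Y : Set R) (hY : K ∉ Y)
    (s : Set (S → D)) (hsfin : s.Finite)
    (SKs : S) (hSKs : Set.InjOn (fun u => u SKs) s)
    (F : S) (hFK : ∀ u ∈ s, ∃ t ∈ r, t K = u F)
    (Xs : Set S) (hXs : SKs ∉ Xs) (hF : F ∈ Xs) :
    (fun u => u F) '' cleanFK s F r K sim Y ⊆ (fun t => t K) '' cleanSK r sim Y K := by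
  -- class equality lemma
  have classVal_eq : ∀ a t' : R → D, a ∈ r → t' ∈ r → AUD sim Y a t' →
      classVal r sim Y K (t' K) = classVal r sim Y K (a K) := by
    intro a t' ha ht' haud
    ext w
    constructor
    · rintro ⟨b, hb, hbK, c, hc, haud', rfl⟩
      have hb' : b = t' := hK hb ht' hbK
      subst hb'
      exact ⟨a, ha, rfl, c, hc, fun A hA => hsim.trans (haud A hA) (haud' A hA), rfl⟩
    · rintro ⟨b, hb, hbK, c, hc, haud', rfl⟩
      have hb' : b = a := hK hb ha hbK
      subst hb'
      exact ⟨t', ht', rfl, c, hc,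
        fun A hA => hsim.trans (hsim.symm (haud A hA)) (haud' A hA), rfl⟩
  rintro v ⟨u, ⟨u', hu', hagree, hleast⟩, rfl⟩
  obtain ⟨a, ha, haK, t', ht', haud, huF⟩ := hleast.1
  have hleast' : IsLeast (classVal r sim Y K (a K)) (u F) := by rwa [haK]
  refine ⟨t', ⟨t', ht', fun A _ => rfl, ?_⟩, huF.symm⟩
  rw [classVal_eq a t' ha ht' haud, ← huF]
  exact hleast'
end

section
/- (Two-relation case of the paper's main theorem.) In the two-relation database setting, let r' = clean_SK(r, K, Y), s' = clean_FK(s, F, r, K), and s'' be obtained from s' by replacing, in each tuple, the SKs-value by the minimum of its equivalence class in s' under the relation 'agree up to ≃ on Xs \ {F} and agree exactly on F'. Then no relation of the database {r', s''} suffers from artificial unicity: (i) for all t₁, t₂ ∈ r', if t₁(A) ≃ t₂(A) for every A ∈ Y then t₁(K) = t₂(K); and (ii) for all u₁, u₂ ∈ s'', if u₁(A) ≃ u₂(A) for every A ∈ Xs \ {F} and either u₁(F) = u₂(F) or the unique tuples t₁, t₂ ∈ r' with tᵢ(K) = uᵢ(F) satisfy t₁(A) ≃ t₂(A) for every A ∈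 Y, then u₁(SKs) = u₂(SKs). -/
/-- The relation on tuples of `s'`: agree up to `≃` on `Xs \ {F}` and agree exactly
on `F`. -/
def relS' {S D : Type*} (sim : D → D → Prop) (Xs : Set S) (F : S)
    (u₁ u₂ : S → D) : Prop :=
  (∀ A ∈ Xs \ {F}, sim (u₁ A) (u₂ A)) ∧ u₁ F = u₂ F

/-- The equivalence class in `s'` of `u(SKs)` under `relS'`. -/
def classS' {S D : Type*} (s' : Set (S → D)) (sim : D → D → Prop) (Xs : Set S) (F : S)
    (SKs : S) (u : S → D) : Set D :=
  { w | ∃ u' ∈ s', relS' sim Xs F u u' ∧ w = u' SKs }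

/-- `s''`: obtained from `s'` by replacing, in each tuple, the `SKs`-value by the
minimum (the least element) of its equivalence class in `s'` under `relS'`. -/
def cleanSKs {S D : Type*} [LinearOrder D] (s' : Set (S → D)) (sim : D → D → Prop)
    (Xs : Set S) (F : S) (SKs : S) : Set (S → D) :=
  { u | ∃ u' ∈ s', (∀ A, A ≠ SKs → u A = u' A) ∧
      IsLeast (classS' s' sim Xs F SKs u') (u SKs) }

/-- two-relation case of the paper's main theorem: with
`r' = clean_SK(r, K, Y)`, `s' = clean_FK(s, F, r, K)` and `s''` obtained from `s'` by
cleaning the `SKs`-values, no relation of the database `{r', s''}` suffers from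
artificial unicity: (i) for all `t₁, t₂ ∈ r'`, if `t₁ A ≃ t₂ A` for every `A ∈ Y` then
`t₁ K = t₂ K`; and (ii) for all `u₁, u₂ ∈ s''`, if `u₁ A ≃ u₂ A` for every
`A ∈ Xs \ {F}` and either `u₁ F = u₂ F` or the unique tuples `t₁, t₂ ∈ r'` with
`tᵢ K = uᵢ F` satisfy `t₁ A ≃ t₂ A` for all `A ∈ Y`, then `u₁ SKs = u₂ SKs`. -/
theorem removing_AU_two_relations {R S D : Type*} [LinearOrder D]
    (sim : D → D → Prop) (hsim : Equivalence sim)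
    (r : Set (R → D)) (hrfin : r.Finite)
    (K : R) (hK : Set.InjOn (fun t => t K) r)
    (Y : Set R) (hY : K ∉ Y)
    (s : Set (S → D)) (hsfin : s.Finite)
    (SKs : S) (hSKs : Set.InjOn (fun u => u SKs) s)
    (F : S) (hFK : ∀ u ∈ s, ∃ t ∈ r, t K = u F)
    (Xs : Set S) (hXs : SKs ∉ Xs) (hF : F ∈ Xs) :
    (∀ t₁ ∈ cleanSK r sim Y K, ∀ t₂ ∈ cleanSK r sim Y K,
      AUD sim Y t₁ t₂ → t₁ K = t₂ K) ∧
    (∀ u₁ ∈ cleanSKs (cleanFK s F r K sim Y) sim Xs F SKs,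
     ∀ u₂ ∈ cleanSKs (cleanFK s F r K sim Y) sim Xs F SKs,
      (∀ A ∈ Xs \ {F}, sim (u₁ A) (u₂ A)) →
      (u₁ F = u₂ F ∨ ∃ t₁ ∈ cleanSK r sim Y K, ∃ t₂ ∈ cleanSK r sim Y K,
        t₁ K = u₁ F ∧ t₂ K = u₂ F ∧ AUD sim Y t₁ t₂) →
      u₁ SKs = u₂ SKs) := by

  have part1 : ∀ t₁ ∈ cleanSK r sim Y K, ∀ t₂ ∈ cleanSK r sim Y K,
      AUD sim Y t₁ t₂ → t₁ K = t₂ K := by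
    rintro t₁ ⟨t₁', ht₁'r, ha₁, hl₁⟩ t₂ ⟨t₂', ht₂'r, ha₂, hl₂⟩ haud
    have haud' : AUD sim Y t₁' t₂' := by
      intro A hA
      have hAK : A ≠ K := fun h => hY (h ▸ hA)
      rw [← ha₁ A hAK, ← ha₂ A hAK]
      exact haud A hA
    have hcl : classVal r sim Y K (t₁' K) = classVal r sim Y K (t₂' K) := by
      ext w
      constructor
      · rintro ⟨t, htr, htK, t', ht'r, haud2, rfl⟩
        have ht : t = t₁' := hK htr ht₁'r htK
        subst ht
        exact ⟨t₂', ht₂'r, rfl, t', ht'r,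
          fun A hA => hsim.trans (hsim.symm (haud' A hA)) (haud2 A hA), rfl⟩
      · rintro ⟨t, htr, htK, t', ht'r, haud2, rfl⟩
        have ht : t = t₂' := hK htr ht₂'r htK
        subst ht
        exact ⟨t₁', ht₁'r, rfl, t', ht'r,
          fun A hA => hsim.trans (haud' A hA) (haud2 A hA), rfl⟩
    rw [hcl] at hl₁
    exact hl₁.unique hl₂
  refine ⟨part1, ?_⟩
  rintro u₁ ⟨u₁', hu₁s', ha₁, hl₁⟩ u₂ ⟨u₂', hu₂s', ha₂, hl₂⟩ hsimXs hcase
  have hFSK : F ≠ SKs := fun h => hXs (h ▸ hF)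
  have hFeq : u₁ F = u₂ F := by
    rcases hcase with h | ⟨t₁, ht₁, t₂, ht₂, h1, h2, haud⟩
    · exact h
    · rw [← h1, ← h2]; exact part1 t₁ ht₁ t₂ ht₂ haud
  have hF' : u₁' F = u₂' F := by rw [← ha₁ F hFSK, ← ha₂ F hFSK]; exact hFeq
  have hsim' : ∀ A ∈ Xs \ {F}, sim (u₁' A) (u₂' A) := by
    intro A hA
    have hASK : A ≠ SKs := fun h => hXs (h ▸ hA.1)
    rw [← ha₁ A hASK, ← ha₂ A hASK]; exact hsimXs A hA
  have hcl : classS' (cleanFK s F r K sim Y) sim Xs F SKs u₁' =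
      classS' (cleanFK s F r K sim Y) sim Xs F SKs u₂' := by
    ext w
    constructor
    · rintro ⟨u'', hu'', ⟨hs2, hf⟩, rfl⟩
      exact ⟨u'', hu'', ⟨fun A hA => hsim.trans (hsim.symm (hsim' A hA)) (hs2 A hA),
        hF' ▸ hf⟩, rfl⟩
    · rintro ⟨u'', hu'', ⟨hs2, hf⟩, rfl⟩
      exact ⟨u'', hu'', ⟨fun A hA => hsim.trans (hsim' A hA) (hs2 A hA),
        hF'.trans hf⟩, rfl⟩
  rw [hcl] at hl₁
  exact hl₁.unique hl₂
end
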